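/- Soundness with function variables: extend matching to carry a function substitution φ (a finite map from function variables F to symbols of Σ), with declarative rule: (θ,φ) ⊢ F(p1,…,pn) ≈ f(t1,…,tn) iff φ(F)=f and (θ,φ) ⊢ pi ≈ ti for all i. Extend the machine states with φ and add rules binding F↦f when F is unbound, continuing when φ(F)=f, and backtracking when φ(F)=g≠f or the arities mismatch. Then if the machine started from (∅, ∅, [], [match p t]) reaches success(θ,φ), the declarative judgment (θ,φ) ⊢ p ≈ t holds. -/

import Mathlib

namespace PyPM

inductive Tm where
  | app : String → List Tm → Tm

/-- Patterns over a signature, with function variables F applied to arguments. -/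
inductive Pat where
  | var : String → Pat
  | app : String → List Pat → Pat
  | fvarApp : String → List Pat → Pat
  | alt : Pat → Pat → Pat

/-- Substitutions: finite maps from pattern variables to terms. -/
abbrev Subst := String → Option Tm

/-- Function substitutions: finite maps from function variables to function symbols. -/
abbrev FSubst := String → Option String

def emptySubst : Subst := fun _ => none
def emptyFSubst : FSubst := fun _ => none

def Subst.update (θ : Subst) (x : String) (t : Tm) : Subst :=
  fun y => if y = x then some t else θ y

def FSubst.update (φ : FSubst) (F f : String) : FSubst :=
  fun G => if G = F then some f else φ G

/-- θ ⊆ θ' : every binding of θ is a binding of θ'. -/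
def Subst.le (θ θ' : Subst) : Prop := ∀ x t, θ x = some t → θ' x = some t

/-- φ ⊆ φ' : every binding of φ is a binding of φ'. -/
def FSubst.le (φ φ' : FSubst) : Prop := ∀ F f, φ F = some f → φ' F = some f

/-- Declarative matching semantics with function variables: (θ, φ) ⊢ p ≈ t. -/
inductive Matches : Subst → FSubst → Pat → Tm → Prop where
  | var {θ φ x t} :
      θ x = some t → Matches θ φ (.var x) t
  | app {θ φ f} {ps : List Pat} {ts : List Tm}
      (hlen : ps.length = ts.length)
      (hargs : ∀ i (h1 : i < ps.length) (h2 : i < ts.length), Matches θ φ ps[i] ts[i]) :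
      Matches θ φ (.app f ps) (.app f ts)
  | fvarApp {θ : Subst} {φ : FSubst} {F f : String} {ps : List Pat} {ts : List Tm}
      (hF : φ F = some f)
      (hlen : ps.length = ts.length)
      (hargs : ∀ i (h1 : i < ps.length) (h2 : i < ts.length), Matches θ φ ps[i] ts[i]) :
      Matches θ φ (.fvarApp F ps) (.app f ts)
  | alt1 {θ φ p p' t} :
      Matches θ φ p t → Matches θ φ (.alt p p') t
  | alt2 {θ φ p p' t} :
      Matches θ φ p' t → Matches θ φ (.alt p p') t

inductive Action where
  | doMatch : Pat → Tm → Action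

abbrev Cont := List Action
abbrev Frame := Subst × FSubst × Cont
abbrev Stack := List Frame

inductive St where
  | success : Subst → FSubst → St
  | failure : St
  | running : Subst → FSubst → Stack → Cont → St

def backtrack : Stack → St
  | [] => .failure
  | (θ, φ, k) :: stk => .running θ φ stk k

/-- The step relation of the machine with function variables. -/
inductive Step : St → St → Prop where
  | success {θ φ stk} :
      Step (.running θ φ stk []) (.success θ φ)
  | varBind {θ : Subst} {φ stk x t k} :
      θ x = none →
      Step (.running θ φ stk (.doMatch (.var x) t :: k)) (.running (θ.update x t) φ stk k)
  | varBound {θ : Subst} {φ stk x t k} :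
      θ x = some t →
      Step (.running θ φ stk (.doMatch (.var x) t :: k)) (.running θ φ stk k)
  | varConflict {θ : Subst} {φ stk x t t' k} :
      θ x = some t' → t' ≠ t →
      Step (.running θ φ stk (.doMatch (.var x) t :: k)) (backtrack stk)
  | fn {θ φ stk f ps ts k} :
      ps.length = ts.length →
      Step (.running θ φ stk (.doMatch (.app f ps) (.app f ts) :: k))
           (.running θ φ stk (((ps.zip ts).map fun pt => .doMatch pt.1 pt.2) ++ k))
  | fnConflict {θ φ stk f g ps ts k} :
      f ≠ g ∨ ps.length ≠ ts.length →
      Step (.running θ φ stk (.doMatch (.app f ps) (.app g ts) :: k)) (backtrack stk)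
  | fvarBind {θ : Subst} {φ : FSubst} {stk F f ps ts k} :
      φ F = none →
      ps.length = ts.length →
      Step (.running θ φ stk (.doMatch (.fvarApp F ps) (.app f ts) :: k))
           (.running θ (φ.update F f) stk
             (((ps.zip ts).map fun pt => .doMatch pt.1 pt.2) ++ k))
  | fvarBound {θ : Subst} {φ : FSubst} {stk F f ps ts k} :
      φ F = some f →
      ps.length = ts.length →
      Step (.running θ φ stk (.doMatch (.fvarApp F ps) (.app f ts) :: k))
           (.running θ φ stk (((ps.zip ts).map fun pt => .doMatch pt.1 pt.2) ++ k))
  | fvarConflict {θ : Subst} {φ : FSubst} {stk F f g ps ts k} :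
      (φ F = some g ∧ g ≠ f) ∨ ps.length ≠ ts.length →
      Step (.running θ φ stk (.doMatch (.fvarApp F ps) (.app f ts) :: k)) (backtrack stk)
  | alt {θ φ stk p p' t k} :
      Step (.running θ φ stk (.doMatch (.alt p p') t :: k))
           (.running θ φ ((θ, φ, .doMatch p' t :: k) :: stk) (.doMatch p t :: k))

end PyPM

open PyPM

/-!
Run the machine backwards from `success(θ, φ)`. The invariant is that some frame of the state,
either the current one or a saved backtrack point, is *valid*: its substitutions are contained in
the final `(θ, φ)` and every pending match obligation holds declaratively under them.
Every step preserves this backwards: it either discharges the head obligation by a binding that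
the final substitutions therefore contain, or replaces it by obligations from which the
declarative rule rebuilds it, or backtracks to a frame that the invariant already covered.
-/

theorem List.rel_getElem_of_forall_mem_zip {α β : Type*} {R : α → β → Prop}
    {as : List α} {bs : List β} (h : ∀ ab ∈ as.zip bs, R ab.1 ab.2) (i : ℕ)
    (ha : i < as.length) (hb : i < bs.length) : R as[i] bs[i] := by
  have hi : i < (as.zip bs).length := by simp [ha, hb]
  simpa using h _ (List.getElem_mem hi)

namespace PyPM

theorem Subst.le_of_update_le {θ θ' : Subst} {x : String} {t : Tm} (hx : θ x = none)
    (h : (θ.update x t).le θ') : θ.le θ' := fun y u hy => by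
  apply h
  have : y ≠ x := by rintro rfl; simp_all
  simpa [Subst.update, this] using hy

theorem FSubst.le_of_update_le {φ φ' : FSubst} {F f : String} (hF : φ F = none)
    (h : (φ.update F f).le φ') : φ.le φ' := fun G g hG => by
  apply h
  have : G ≠ F := by rintro rfl; simp_all
  simpa [FSubst.update, this] using hG

def Action.Holds (θ : Subst) (φ : FSubst) : Action → Prop
  | .doMatch p t => Matches θ φ p t

theorem matches_args_of_holds {θ : Subst} {φ : FSubst} {ps : List Pat} {ts : List Tm}
    (h : ∀ a ∈ (ps.zip ts).map (fun pt => Action.doMatch pt.1 pt.2), a.Holds θ φ) :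
    ∀ i (h1 : i < ps.length) (h2 : i < ts.length), Matches θ φ ps[i] ts[i] :=
  List.rel_getElem_of_forall_mem_zip fun _ hpt => h _ (List.mem_map_of_mem hpt)

def Frame.Valid (θ : Subst) (φ : FSubst) (fr : Frame) : Prop :=
  fr.1.le θ ∧ fr.2.1.le φ ∧ ∀ a ∈ fr.2.2, a.Holds θ φ

def St.Valid (θ : Subst) (φ : FSubst) : St → Prop
  | .success θ' φ' => θ' = θ ∧ φ' = φ
  | .failure => False
  | .running θ' φ' stk k => ∃ fr ∈ (θ', φ', k) :: stk, Frame.Valid θ φ fr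

section Validity

variable {θf : Subst} {φf : FSubst} {θ θ' : Subst} {φ φ' : FSubst} {stk : Stack} {k k' : Cont}

theorem St.valid_running_of_frame
    (hfr : Frame.Valid θf φf (θ', φ', k') → Frame.Valid θf φf (θ, φ, k))
    (h : (St.running θ' φ' stk k').Valid θf φf) : (St.running θ φ stk k).Valid θf φf := by
  obtain ⟨fr, hmem, hv⟩ := h
  rcases List.mem_cons.1 hmem with rfl | hmem
  · exact ⟨_, List.mem_cons_self, hfr hv⟩
  · exact ⟨fr, List.mem_cons_of_mem _ hmem, hv⟩

theorem St.valid_running_of_backtrack (h : (backtrack stk).Valid θf φf) :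
    (St.running θ φ stk k).Valid θf φf := by
  match stk, h with
  | _ :: _, ⟨fr, hmem, hv⟩ => exact ⟨fr, List.mem_cons_of_mem _ hmem, hv⟩

theorem Frame.valid_cons {p : Pat} {t : Tm} (hm : Matches θf φf p t)
    (h : Frame.Valid θf φf (θ, φ, k)) : Frame.Valid θf φf (θ, φ, .doMatch p t :: k) := by
  obtain ⟨hθ, hφ, hk⟩ := h
  exact ⟨hθ, hφ, List.forall_mem_cons.2 ⟨hm, hk⟩⟩

theorem Frame.valid_cons_of_imp {p q : Pat} {t : Tm}
    (hpq : Matches θf φf p t → Matches θf φf q t)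
    (h : Frame.Valid θf φf (θ, φ, .doMatch p t :: k)) :
    Frame.Valid θf φf (θ, φ, .doMatch q t :: k) := by
  obtain ⟨hθ, hφ, hk⟩ := h
  obtain ⟨hp, hk⟩ := List.forall_mem_cons.1 hk
  exact Frame.valid_cons (hpq hp) ⟨hθ, hφ, hk⟩

end Validity

theorem Step.valid_of_valid {θf : Subst} {φf : FSubst} {s s' : St} (hs : Step s s')
    (h : s'.Valid θf φf) : s.Valid θf φf := by
  cases hs with
  | success =>
    obtain ⟨rfl, rfl⟩ := h
    exact ⟨_, List.mem_cons_self, fun _ _ h => h, fun _ _ h => h, by simp⟩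
  | varBind hx =>
    refine St.valid_running_of_frame (fun ⟨hθ, hφ, hk⟩ => ?_) h
    exact Frame.valid_cons (.var (hθ _ _ (by simp [Subst.update])))
      ⟨Subst.le_of_update_le hx hθ, hφ, hk⟩
  | varBound hx =>
    exact St.valid_running_of_frame (fun hv => Frame.valid_cons (.var (hv.1 _ _ hx)) hv) h
  | fn hlen =>
    refine St.valid_running_of_frame (fun ⟨hθ, hφ, hk⟩ => ?_) h
    obtain ⟨hargs, hk⟩ := List.forall_mem_append.1 hk
    exact Frame.valid_cons (.app hlen (matches_args_of_holds hargs)) ⟨hθ, hφ, hk⟩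
  | fvarBind hF hlen =>
    refine St.valid_running_of_frame (fun ⟨hθ, hφ, hk⟩ => ?_) h
    obtain ⟨hargs, hk⟩ := List.forall_mem_append.1 hk
    exact Frame.valid_cons (.fvarApp (hφ _ _ (by simp [FSubst.update])) hlen
      (matches_args_of_holds hargs)) ⟨hθ, FSubst.le_of_update_le hF hφ, hk⟩
  | fvarBound hF hlen =>
    refine St.valid_running_of_frame (fun ⟨hθ, hφ, hk⟩ => ?_) h
    obtain ⟨hargs, hk⟩ := List.forall_mem_append.1 hk
    exact Frame.valid_cons (.fvarApp (hφ _ _ hF) hlen (matches_args_of_holds hargs))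
      ⟨hθ, hφ, hk⟩
  | varConflict | fnConflict | fvarConflict => exact St.valid_running_of_backtrack h
  | alt =>
    obtain ⟨fr, hmem, hv⟩ := h
    simp only [List.mem_cons] at hmem
    rcases hmem with rfl | rfl | hmem
    · exact ⟨_, List.mem_cons_self, Frame.valid_cons_of_imp .alt1 hv⟩
    · exact ⟨_, List.mem_cons_self, Frame.valid_cons_of_imp .alt2 hv⟩
    · exact ⟨fr, List.mem_cons_of_mem _ hmem, hv⟩

theorem St.valid_of_reflTransGen {θf : Subst} {φf : FSubst} {s : St}
    (h : Relation.ReflTransGen Step s (.success θf φf)) : s.Valid θf φf := by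
  induction h using Relation.ReflTransGen.head_induction_on with
  | refl => exact ⟨rfl, rfl⟩
  | head hs _ ih => exact hs.valid_of_valid ih

end PyPM

/-- Soundness of the machine with function variables (success case). -/
theorem fvar_soundness_success {p : Pat} {t : Tm} {θ : Subst} {φ : FSubst}
    (h : Relation.TransGen Step (.running emptySubst emptyFSubst [] [.doMatch p t])
          (.success θ φ)) :
    Matches θ φ p t := by
  obtain ⟨fr, hmem, -, -, hk⟩ := St.valid_of_reflTransGen h.to_reflTransGen
  obtain rfl : fr = _ := List.mem_singleton.1 hmem
  exact hk _ List.mem_cons_self
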